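/- Let N ≥ 1 and let S > 0 and σ > 0. Let τx_0,…,τx_{N−1}, τy_0,…,τy_{N−1} be 2N independent real random variables, each with law gaussianReal 0 (S²σ²/2), and set τ_k = τx_k + i·τy_k ∈ ℂ. Then for every index j ∈ {0,…,N−1}, the law of Re((F⁻¹ τ)_j) is gaussianReal 0 (S²σ²/2), and the law of Im((F⁻¹ τ)_j) is gaussianReal 0 (S²σ²/2). -/

import Mathlib

/-!
Coordinate `j` of `F⁻¹ τ` is `∑ₖ τₖ wₖ` with `wₖ = exp (2πi k j / N) / √N`, so `∑ₖ |wₖ|² = 1`.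
Its real and imaginary parts are therefore real linear combinations of the `2N` independent
`N(0, v)` coordinates with a unit coefficient vector. Characteristic functions of independent
Gaussians multiply and `charFun (gaussianReal 0 v) t = exp (-v t² / 2)`, so such a combination is
again `N(0, v)`.
-/

open MeasureTheory ProbabilityTheory

/-- The inverse unitary discrete Fourier transform on `ℂ^N`. -/
noncomputable def idft {N : ℕ} (z : Fin N → ℂ) : Fin N → ℂ := fun n =>
  (1 / (Real.sqrt N : ℂ)) *
    ∑ i : Fin N, z i * Complex.exp ((2 * (Real.pi : ℂ) * Complex.I * (i : ℕ) * (n : ℕ)) / N)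

open scoped NNReal

lemma MeasureTheory.Measure.pi_map_comp_eval {ι α β : Type*} [Fintype ι] [MeasurableSpace α]
    [MeasurableSpace β] (μ : Measure α) [IsProbabilityMeasure μ] {f : α → β} (hf : Measurable f)
    (k : ι) :
    (Measure.pi fun _ : ι ↦ μ).map (fun τ ↦ f (τ k)) = μ.map f := by
  change Measure.map (f ∘ fun τ : ι → α ↦ τ k) _ = _
  rw [← Measure.map_map hf (measurable_pi_apply k), (measurePreserving_eval _ k).map_eq]

namespace ProbabilityTheory

lemma iIndepFun.map_sum_eq_gaussianReal {Ω ι : Type*} {mΩ : MeasurableSpace Ω} {P : Measure Ω}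
    [IsProbabilityMeasure P] [Fintype ι] {X : ι → Ω → ℝ} {m : ι → ℝ} {v : ι → ℝ≥0}
    (hX : iIndepFun X P) (mX : ∀ i, AEMeasurable (X i) P)
    (hlaw : ∀ i, P.map (X i) = gaussianReal (m i) (v i)) :
    P.map (fun ω ↦ ∑ i, X i ω) = gaussianReal (∑ i, m i) (∑ i, v i) := by
  refine Measure.ext_of_charFun ?_
  ext t
  simp_rw [hX.charFun_map_fun_sum_eq_prod mX, Finset.prod_apply, hlaw, charFun_gaussianReal,
    ← Complex.exp_sum]
  push_cast
  rw [Finset.sum_sub_distrib, ← Finset.sum_mul, ← Finset.mul_sum, ← Finset.sum_div,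
    ← Finset.sum_mul]

lemma gaussianReal_prod_map_linear (m₁ m₂ : ℝ) (v₁ v₂ : ℝ≥0) (a b : ℝ) :
    ((gaussianReal m₁ v₁).prod (gaussianReal m₂ v₂)).map (fun p ↦ a * p.1 + b * p.2) =
      gaussianReal (a * m₁ + b * m₂)
        (.mk (a ^ 2) (sq_nonneg _) * v₁ + .mk (b ^ 2) (sq_nonneg _) * v₂) := by
  refine gaussianReal_add_gaussianReal_of_indepFun
    (indepFun_prod (measurable_const_mul a) (measurable_const_mul b)) ?_ ?_
  · change Measure.map ((a * ·) ∘ Prod.fst) _ = _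
    rw [← Measure.map_map (measurable_const_mul a) measurable_fst, Measure.map_fst_prod,
      measure_univ, one_smul, gaussianReal_map_const_mul]
  · change Measure.map ((b * ·) ∘ Prod.snd) _ = _
    rw [← Measure.map_map (measurable_const_mul b) measurable_snd, Measure.map_snd_prod,
      measure_univ, one_smul, gaussianReal_map_const_mul]

lemma pi_gaussianReal_prod_map_sum {ι : Type*} [Fintype ι] (v : ℝ≥0) (a b : ι → ℝ)
    (hab : ∑ k, (a k ^ 2 + b k ^ 2) = 1) :
    (Measure.pi fun _ : ι ↦ (gaussianReal 0 v).prod (gaussianReal 0 v)).map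
        (fun τ ↦ ∑ k, (a k * (τ k).1 + b k * (τ k).2)) = gaussianReal 0 v := by
  have hmeas : ∀ k, Measurable fun p : ℝ × ℝ ↦ a k * p.1 + b k * p.2 := fun k ↦ by fun_prop
  rw [(iIndepFun_pi fun k ↦ (hmeas k).aemeasurable).map_sum_eq_gaussianReal
    (fun k ↦ ((hmeas k).comp (measurable_pi_apply k)).aemeasurable)
    fun k ↦ (Measure.pi_map_comp_eval _ (hmeas k) k).trans (gaussianReal_prod_map_linear ..)]
  congr 1
  · simp
  · ext
    push_cast
    simp_rw [← add_mul, ← Finset.sum_mul, hab, one_mul]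

lemma pi_gaussianReal_prod_map_re_sum_mul {ι : Type*} [Fintype ι] (v : ℝ≥0) (w : ι → ℂ)
    (hw : ∑ k, Complex.normSq (w k) = 1) :
    (Measure.pi fun _ : ι ↦ (gaussianReal 0 v).prod (gaussianReal 0 v)).map
        (fun τ ↦ (∑ k, (((τ k).1 : ℂ) + Complex.I * (τ k).2) * w k).re) = gaussianReal 0 v := by
  convert pi_gaussianReal_prod_map_sum v (fun k ↦ (w k).re) (fun k ↦ -(w k).im) ?_ using 2
  · funext τ
    rw [Complex.re_sum]
    refine Finset.sum_congr rfl fun k _ ↦ ?_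
    simp only [Complex.mul_re, Complex.add_re, Complex.add_im, Complex.ofReal_re,
      Complex.ofReal_im, Complex.I_re, Complex.I_im, Complex.mul_im]
    ring
  · simpa [Complex.normSq_apply, ← sq] using hw

lemma pi_gaussianReal_prod_map_im_sum_mul {ι : Type*} [Fintype ι] (v : ℝ≥0) (w : ι → ℂ)
    (hw : ∑ k, Complex.normSq (w k) = 1) :
    (Measure.pi fun _ : ι ↦ (gaussianReal 0 v).prod (gaussianReal 0 v)).map
        (fun τ ↦ (∑ k, (((τ k).1 : ℂ) + Complex.I * (τ k).2) * w k).im) = gaussianReal 0 v := by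
  convert pi_gaussianReal_prod_map_sum v (fun k ↦ (w k).im) (fun k ↦ (w k).re) ?_ using 2
  · funext τ
    rw [Complex.im_sum]
    refine Finset.sum_congr rfl fun k _ ↦ ?_
    simp only [Complex.mul_re, Complex.add_re, Complex.add_im, Complex.ofReal_re,
      Complex.ofReal_im, Complex.I_re, Complex.I_im, Complex.mul_im]
    ring
  · simpa [Complex.normSq_apply, ← sq, add_comm] using hw

end ProbabilityTheory

lemma idft_apply {N : ℕ} (z : Fin N → ℂ) (n : Fin N) :
    idft z n =
      ∑ k, z k * (Complex.exp (((2 * Real.pi * k * n / N : ℝ) : ℂ) * Complex.I) / √N) := by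
  rw [idft, Finset.mul_sum]
  refine Finset.sum_congr rfl fun k _ ↦ ?_
  push_cast
  ring_nf

lemma sum_normSq_exp_mul_I_div_sqrt {N : ℕ} (hN : N ≠ 0) (θ : Fin N → ℝ) :
    ∑ k, Complex.normSq (Complex.exp ((θ k : ℂ) * Complex.I) / √N) = 1 := by
  simp [Complex.normSq_eq_norm_sq, Complex.norm_exp_ofReal_mul_I, hN]

theorem gredp_noise_idft_general (N : ℕ) (S σ : ℝ) (j : Fin N) :
    Measure.map
      (fun τ : Fin N → ℝ × ℝ =>
        (idft (fun k => (((τ k).1 : ℂ) + Complex.I * ((τ k).2 : ℂ))) j).re)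
      (Measure.pi (fun _ : Fin N =>
        (gaussianReal 0 ((S ^ 2 * σ ^ 2 / 2).toNNReal)).prod
          (gaussianReal 0 ((S ^ 2 * σ ^ 2 / 2).toNNReal))))
      = gaussianReal 0 ((S ^ 2 * σ ^ 2 / 2).toNNReal) ∧
    Measure.map
      (fun τ : Fin N → ℝ × ℝ =>
        (idft (fun k => (((τ k).1 : ℂ) + Complex.I * ((τ k).2 : ℂ))) j).im)
      (Measure.pi (fun _ : Fin N =>
        (gaussianReal 0 ((S ^ 2 * σ ^ 2 / 2).toNNReal)).prod
          (gaussianReal 0 ((S ^ 2 * σ ^ 2 / 2).toNNReal))))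
      = gaussianReal 0 ((S ^ 2 * σ ^ 2 / 2).toNNReal) := by
  have hw := sum_normSq_exp_mul_I_div_sqrt j.pos.ne' fun k ↦ 2 * Real.pi * k * j / N
  simp_rw [idft_apply]
  exact ⟨pi_gaussianReal_prod_map_re_sum_mul _ _ hw, pi_gaussianReal_prod_map_im_sum_mul _ _ hw⟩

/-- Key distributional claim in the proof of Theorem 1: the inverse Fourier transform of a
vector of i.i.d. circularly symmetric complex Gaussian noise (real and imaginary parts each
of variance `S²σ²/2`) has, in each coordinate, real and imaginary parts each distributed as
a centered real Gaussian of variance `S²σ²/2`. -/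
theorem gredp_noise_idft (N : ℕ) (hN : 1 ≤ N) (S σ : ℝ) (hS : 0 < S) (hσ : 0 < σ)
    (j : Fin N) :
    Measure.map
      (fun τ : Fin N → ℝ × ℝ =>
        (idft (fun k => (((τ k).1 : ℂ) + Complex.I * ((τ k).2 : ℂ))) j).re)
      (Measure.pi (fun _ : Fin N =>
        (gaussianReal 0 ((S ^ 2 * σ ^ 2 / 2).toNNReal)).prod
          (gaussianReal 0 ((S ^ 2 * σ ^ 2 / 2).toNNReal))))
      = gaussianReal 0 ((S ^ 2 * σ ^ 2 / 2).toNNReal) ∧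
    Measure.map
      (fun τ : Fin N → ℝ × ℝ =>
        (idft (fun k => (((τ k).1 : ℂ) + Complex.I * ((τ k).2 : ℂ))) j).im)
      (Measure.pi (fun _ : Fin N =>
        (gaussianReal 0 ((S ^ 2 * σ ^ 2 / 2).toNNReal)).prod
          (gaussianReal 0 ((S ^ 2 * σ ^ 2 / 2).toNNReal))))
      = gaussianReal 0 ((S ^ 2 * σ ^ 2 / 2).toNNReal) :=
  gredp_noise_idft_general N S σ j
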